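/- arXiv:2010.06399 — 8 statements merged into one kernel-verified Lean document; each statement's English description precedes it below -/
import Mathlib

section
/- For n ≥ 1, the element (X_n + 1)/(X_n - 1) is a unit of the ring of integers Z[X_n] of B_n = Q(X_n). -/
open Real Filter Finset

noncomputable def X (n : ℕ) : ℝ := 2 * Real.cos (Real.pi / 2 ^ (n + 1))

noncomputable def F : ℕ → Polynomial ℤ
  | 0 => Polynomial.X
  | n + 1 => (F n).comp (Polynomial.X ^ 2 - 2)

lemma X_sq (n : ℕ) : X (n + 1) ^ 2 - 2 = X n := by
  have h2 : Real.pi / 2 ^ (n + 1) = 2 * (Real.pi / 2 ^ (n + 2)) := by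
    rw [pow_succ]
    ring
  have := Real.cos_two_mul (Real.pi / 2 ^ (n + 2))
  simp only [X, h2, this]
  ring

lemma aeval_F (n : ℕ) : Polynomial.aeval (X n) (F n) = 0 := by
  induction n with
  | zero =>
    simp [F, X, Real.cos_pi_div_two]
  | succ n ih =>
    simp only [F, Polynomial.aeval_comp, map_sub, map_pow, Polynomial.aeval_X, map_ofNat]
    rw [X_sq, ih]

lemma F_eval (n : ℕ) (hn : 1 ≤ n) : (F n).eval 1 = -1 ∧ (F n).eval (-1) = -1 := by
  induction n, hn using Nat.le_induction with
  | base =>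
    constructor <;> simp [F]
  | succ n hn ih =>
    have h : ((Polynomial.X ^ 2 - 2 : Polynomial ℤ)).eval 1 = -1 := by norm_num
    have h' : ((Polynomial.X ^ 2 - 2 : Polynomial ℤ)).eval (-1) = -1 := by norm_num
    constructor <;> simp only [F, Polynomial.eval_comp, h, h'] <;> exact ih.2

theorem stmt4 (n : ℕ) (hn : 1 ≤ n) :
    ∃ u : (Algebra.adjoin ℤ ({X n} : Set ℝ))ˣ,
      ((u : Algebra.adjoin ℤ ({X n} : Set ℝ)) : ℝ) = (X n + 1) / (X n - 1) := by
  set R := Algebra.adjoin ℤ ({X n} : Set ℝ) with hR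
  have hxmem : X n ∈ R := Algebra.subset_adjoin (Set.mem_singleton _)
  set x : R := ⟨X n, hxmem⟩ with hxdef
  -- aeval x (F n) = 0 in R
  have hcoe : ∀ p : Polynomial ℤ, ((Polynomial.aeval x p : R) : ℝ) = Polynomial.aeval (X n) p := by
    intro p
    exact (Polynomial.aeval_algHom_apply R.val x p).symm
  have hx0 : Polynomial.aeval x (F n) = 0 := by
    apply Subtype.ext
    rw [hcoe]
    simpa using aeval_F n
  obtain ⟨he1, he2⟩ := F_eval n hn
  have hd1 : (Polynomial.X - Polynomial.C 1) ∣ (F n + 1) := by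
    rw [Polynomial.dvd_iff_isRoot]
    simp [Polynomial.IsRoot, he1]
  have hd2 : (Polynomial.X - Polynomial.C (-1)) ∣ (F n + 1) := by
    rw [Polynomial.dvd_iff_isRoot]
    simp [Polynomial.IsRoot, he2]
  obtain ⟨h, hh⟩ := hd1
  obtain ⟨k, hk⟩ := hd2
  have e1 : (x - 1) * Polynomial.aeval x h = 1 := by
    have := congrArg (Polynomial.aeval x) hh
    simp only [map_add, map_mul, map_sub, Polynomial.aeval_X, Polynomial.aeval_C, map_one,
      hx0, zero_add] at this
    exact this.symm
  have e2 : (x + 1) * Polynomial.aeval x k = 1 := by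
    have := congrArg (Polynomial.aeval x) hk
    simp only [map_add, map_mul, map_sub, Polynomial.aeval_X, Polynomial.aeval_C, map_one,
      map_neg, sub_neg_eq_add, hx0, zero_add] at this
    exact this.symm
  refine ⟨⟨(x + 1) * Polynomial.aeval x h, (x - 1) * Polynomial.aeval x k, ?_, ?_⟩, ?_⟩
  · rw [show (x + 1) * Polynomial.aeval x h * ((x - 1) * Polynomial.aeval x k)
        = ((x - 1) * Polynomial.aeval x h) * ((x + 1) * Polynomial.aeval x k) by ring,
      e1, e2, one_mul]
  · rw [show (x - 1) * Polynomial.aeval x k * ((x + 1) * Polynomial.aeval x h)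
        = ((x - 1) * Polynomial.aeval x h) * ((x + 1) * Polynomial.aeval x k) by ring,
      e1, e2, one_mul]
  · have e1' : (X n - 1) * Polynomial.aeval (X n) h = 1 := by
      have := congrArg (fun r : R => (r : ℝ)) e1
      simpa [hcoe] using this
    have hne : X n - 1 ≠ 0 := left_ne_zero_of_mul_eq_one e1'
    have : ((((x + 1) * Polynomial.aeval x h : R)) : ℝ)
        = (X n + 1) * Polynomial.aeval (X n) h := by
      push_cast [hcoe]
      ring
    rw [Units.val_mk, this, eq_div_iff hne]
    linear_combination (X n + 1) * e1'
end

section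
/- For the continued fraction data a_0 = 1, a_{2k-1} = 2(1+x)^{-1}, a_{2k} = 2 (k ≥ 1) with x = τ(X_{n-1}) a conjugate of X_{n-1} (so -2 < x < 2, x ≠ -1), the limit of the convergents p_k/q_k (defined by p_k = a_k p_{k-1} + p_{k-2}, q_k = a_k q_{k-1} + q_{k-2}, p_{-1}=1, p_0=1, q_{-1}=0, q_0=1) exists and equals √(2 + x). -/
open Real Filter Finset

theorem alternating_recurrence_closed_form {a E : ℕ → ℝ} {z : ℝ}
    (hz1 : z - 1 ≠ 0) (hz2 : z + 1 ≠ 0)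
    (hodd : ∀ m, a (2 * m + 1) = 2 / (z ^ 2 - 1)) (heven : ∀ m, a (2 * m + 2) = 2)
    (h0 : E 0 = 1) (h1 : E 1 = 1 - z) (hrec : ∀ k, E (k + 2) = a (k + 1) * E (k + 1) + E k) :
    ∀ m, E (2 * m) = ((z - 1) / (z + 1)) ^ m ∧ E (2 * m + 1) = (1 - z) * ((z - 1) / (z + 1)) ^ m
  | 0 => by simp [h0, h1]
  | m + 1 => by
    obtain ⟨ih0, ih1⟩ := alternating_recurrence_closed_form hz1 hz2 hodd heven h0 h1 hrec m
    have h2 : E (2 * m + 2) = ((z - 1) / (z + 1)) ^ (m + 1) := by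
      rw [hrec, hodd, ih1, ih0, show z ^ 2 - 1 = (z - 1) * (z + 1) by ring, pow_succ]
      field_simp
      ring
    refine ⟨h2, ?_⟩
    rw [show 2 * (m + 1) + 1 = 2 * m + 1 + 2 by ring, hrec, heven, h2, ih1, pow_succ]
    field_simp
    ring

theorem sub_mul_eq_pow_mul_add_mul {a P Q : ℕ → ℝ} {y : ℝ} (hy0 : 0 < y) (hy1 : y ≠ 1)
    (hodd : ∀ m, a (2 * m + 1) = 2 / (y ^ 2 - 1)) (heven : ∀ m, a (2 * m + 2) = 2)
    (hP0 : P 0 = 1) (hP1 : P 1 = 1) (hQ0 : Q 0 = 0) (hQ1 : Q 1 = 1)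
    (hPrec : ∀ k, P (k + 2) = a (k + 1) * P (k + 1) + P k)
    (hQrec : ∀ k, Q (k + 2) = a (k + 1) * Q (k + 1) + Q k) (k : ℕ) :
    P k - y * Q k = ((1 - y) / (1 + y)) ^ k * (P k + y * Q k) ∧ P k + y * Q k ≠ 0 := by
  have closed (z : ℝ) (hz : z ^ 2 = y ^ 2) (hz1 : z - 1 ≠ 0) (hz2 : z + 1 ≠ 0) :=
    alternating_recurrence_closed_form (E := fun k => P k - z * Q k) hz1 hz2 (hz ▸ hodd) heven
      (by simp [hP0, hQ0]) (by simp [hP1, hQ1])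
      (fun k => by simp only [hPrec, hQrec]; ring)
  have hy_sub : y - 1 ≠ 0 := sub_ne_zero.mpr hy1
  have hy_add : y + 1 ≠ 0 := by positivity
  have hpos := closed y rfl hy_sub hy_add
  have hneg := closed (-y) (neg_sq y) (by intro h; linarith) (by intro h; apply hy1; linarith)
  set r := (y - 1) / (y + 1) with hr
  have hr0 : r ≠ 0 := div_ne_zero hy_sub hy_add
  have hry : r * (y + 1) = y - 1 := div_mul_cancel₀ _ hy_add
  have hs : (-y - 1) / (-y + 1) = r⁻¹ := by
    rw [hr, inv_div, div_eq_div_iff (by intro h; apply hy1; linarith) hy_sub]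
    ring
  have hρ : (1 - y) / (1 + y) = -r := by rw [hr, ← neg_div, neg_sub, add_comm]
  clear_value r
  simp only [neg_mul, sub_neg_eq_add, hs, inv_pow] at hneg
  rw [hρ]
  obtain ⟨m, rfl | rfl⟩ := Nat.even_or_odd' k
  · rw [(hpos m).1, (hneg m).1, pow_mul, neg_sq, ← pow_mul, mul_comm 2 m, pow_mul]
    refine ⟨?_, by positivity⟩
    field_simp
  · rw [(hpos m).2, (hneg m).2]
    refine ⟨?_, mul_ne_zero (by positivity) (by positivity)⟩
    rw [Odd.neg_pow ⟨m, rfl⟩, pow_succ, pow_mul]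
    field_simp
    linear_combination (r ^ m) ^ 2 * hry

theorem div_eq_of_sub_eq_mul_add {P Q y t : ℝ} (hy : y ≠ 0) (h : P - y * Q = t * (P + y * Q))
    (hF : P + y * Q ≠ 0) : P / Q = y * (1 + t) / (1 - t) := by
  have hP : 2 * P = (P + y * Q) * (1 + t) := by linear_combination h
  have hQ : 2 * y * Q = (P + y * Q) * (1 - t) := by linear_combination -h
  calc P / Q = y * (2 * P) / (2 * y * Q) := by
        rw [mul_left_comm, ← mul_assoc, mul_div_mul_left _ _ (mul_ne_zero two_ne_zero hy)]
    _ = (P + y * Q) * (y * (1 + t)) / ((P + y * Q) * (1 - t)) := by rw [hP, hQ, mul_left_comm]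
    _ = y * (1 + t) / (1 - t) := mul_div_mul_left _ _ hF

theorem tendsto_mul_one_add_pow_div_one_sub_pow {y ρ : ℝ} (hρ : |ρ| < 1) :
    Tendsto (fun k : ℕ => y * (1 + ρ ^ k) / (1 - ρ ^ k)) atTop (nhds y) := by
  have h := tendsto_pow_atTop_nhds_zero_of_abs_lt_one hρ
  have := ((h.const_add 1).const_mul y).div (h.const_sub 1) (by norm_num)
  rwa [add_zero, sub_zero, mul_one, div_one] at this

theorem stmt5_general (x : ℝ)
    (hx1 : -2 < x) (hx3 : x ≠ -1)
    (a P Q : ℕ → ℝ)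
    (ha0 : a 0 = 1)
    (haodd : ∀ k : ℕ, 1 ≤ k → a (2 * k - 1) = 2 / (1 + x))
    (haeven : ∀ k : ℕ, 1 ≤ k → a (2 * k) = 2)
    (hP0 : P 0 = 1) (hP1 : P 1 = a 0)
    (hQ0 : Q 0 = 0) (hQ1 : Q 1 = 1)
    (hPrec : ∀ k, P (k + 2) = a (k + 1) * P (k + 1) + P k)
    (hQrec : ∀ k, Q (k + 2) = a (k + 1) * Q (k + 1) + Q k) :
    Tendsto (fun k => P (k + 1) / Q (k + 1)) atTop (nhds (Real.sqrt (2 + x))) := by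
  set y := √(2 + x)
  have hy0 : 0 < y := Real.sqrt_pos.mpr (by linarith)
  have hy2 : y ^ 2 = 2 + x := Real.sq_sqrt (by linarith)
  have hy1 : y ≠ 1 := fun h => hx3 (by rw [h] at hy2; linarith)
  have hodd (m : ℕ) : a (2 * m + 1) = 2 / (y ^ 2 - 1) := by
    rw [hy2, show 2 + x - 1 = 1 + x by ring]
    exact haodd (m + 1) (by omega)
  have heven (m : ℕ) : a (2 * m + 2) = 2 := haeven (m + 1) (by omega)
  have hρ : |(1 - y) / (1 + y)| < 1 := by
    rw [abs_div, abs_of_pos (by linarith : 0 < 1 + y), div_lt_one (by linarith), abs_lt]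
    constructor <;> linarith
  refine ((tendsto_mul_one_add_pow_div_one_sub_pow hρ).comp (tendsto_add_atTop_nat 1)).congr
    fun k => ?_
  obtain ⟨h, hF⟩ := sub_mul_eq_pow_mul_add_mul hy0 hy1 hodd heven hP0 (hP1.trans ha0) hQ0 hQ1
    hPrec hQrec (k + 1)
  exact (div_eq_of_sub_eq_mul_add hy0.ne' h hF).symm

theorem stmt5 (n : ℕ) (hn : 1 ≤ n) (x : ℝ)
    (hconj : ∃ k : ℕ, k < 2 ^ (n - 1) ∧
      x = 2 * Real.cos ((2 * k + 1) * Real.pi / 2 ^ n))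
    (hx1 : -2 < x) (hx2 : x < 2) (hx3 : x ≠ -1)
    (a P Q : ℕ → ℝ)
    (ha0 : a 0 = 1)
    (haodd : ∀ k : ℕ, 1 ≤ k → a (2 * k - 1) = 2 / (1 + x))
    (haeven : ∀ k : ℕ, 1 ≤ k → a (2 * k) = 2)
    (hP0 : P 0 = 1) (hP1 : P 1 = a 0)
    (hQ0 : Q 0 = 0) (hQ1 : Q 1 = 1)
    (hPrec : ∀ k, P (k + 2) = a (k + 1) * P (k + 1) + P k)
    (hQrec : ∀ k, Q (k + 2) = a (k + 1) * Q (k + 1) + Q k) :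
    Tendsto (fun k => P (k + 1) / Q (k + 1)) atTop (nhds (Real.sqrt (2 + x))) :=
  stmt5_general x hx1 hx3 a P Q ha0 haodd haeven hP0 hP1 hQ0 hQ1 hPrec hQrec
end

section
/- For all n ≥ 2, there exists a Galois conjugate x of X_n (i.e., x = 2cos((2k-1)π/2^{n+1}) for some k) with 0 < x < 1; consequently (x+1)/(x-1) < 0, and hence √((X_n+1)/(X_n-1)) does not lie in the totally real field B_n. -/
open Real Filter Finset Complex Polynomial IntermediateField

lemma two_cos_eq (n j : ℕ) :
    Complex.exp (2 * Real.pi * I / ((2 ^ (n + 2) : ℕ) : ℂ)) ^ (2 * j + 1)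
      + (Complex.exp (2 * Real.pi * I / ((2 ^ (n + 2) : ℕ) : ℂ)) ^ (2 * j + 1))⁻¹
    = ((2 * Real.cos ((2 * j + 1) * Real.pi / 2 ^ (n + 1)) : ℝ) : ℂ) := by
  rw [← Complex.exp_nat_mul]
  have hθ : ((2 * j + 1 : ℕ) : ℂ) * (2 * (Real.pi : ℂ) * I / ((2 ^ (n + 2) : ℕ) : ℂ))
      = (((2 * j + 1 : ℝ) * Real.pi / 2 ^ (n + 1) : ℝ) : ℂ) * I := by
    push_cast
    rw [pow_succ]
    ring
  rw [hθ, ← Complex.exp_neg, ← neg_mul, ← Complex.two_cos]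
  push_cast [Complex.ofReal_cos]
  ring_nf

lemma conj_aeval (n : ℕ) (j : ℕ) (hco : Nat.Coprime (2 * j + 1) (2 ^ (n + 2))) :
    IsIntegral ℚ (X n) ∧
    (Polynomial.aeval (2 * Real.cos ((2 * j + 1) * Real.pi / 2 ^ (n + 1)) : ℝ))
      (minpoly ℚ (X n)) = 0 := by
  set m : ℕ := 2 ^ (n + 2) with hm
  have hm0 : m ≠ 0 := by positivity
  have hmpos : 0 < m := Nat.pos_of_ne_zero hm0
  set ζ : ℂ := Complex.exp (2 * Real.pi * I / (m : ℂ)) with hζdef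
  have hζ : IsPrimitiveRoot ζ m := Complex.isPrimitiveRoot_exp m hm0
  set ω : ℂ := ζ ^ (2 * j + 1) with hωdef
  have hω : IsPrimitiveRoot ω m := hζ.pow_of_coprime _ hco
  have hζint : IsIntegral ℚ ζ := (hζ.isIntegral hmpos).tower_top
  have hωint : IsIntegral ℚ ω := hζint.pow _
  have hζinv : ζ⁻¹ = ζ ^ (m - 1) := by
    refine inv_eq_of_mul_eq_one_right ?_
    rw [← pow_succ', Nat.sub_add_cancel hmpos]
    exact hζ.pow_eq_one
  have hXC : ((X n : ℝ) : ℂ) = ζ + ζ⁻¹ := by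
    have h0 := two_cos_eq n 0
    simp only [mul_zero, zero_add, pow_one, Nat.cast_zero, one_mul] at h0
    rw [show (X n : ℝ) = 2 * Real.cos (Real.pi / 2 ^ (n + 1)) from rfl]
    exact h0.symm
  have hXint : IsIntegral ℚ (X n) := by
    rw [← isIntegral_algebraMap_iff (algebraMap ℝ ℂ).injective]
    show IsIntegral ℚ ((X n : ℝ) : ℂ)
    rw [hXC, hζinv]
    exact hζint.add (hζint.pow _)
  refine ⟨hXint, ?_⟩
  -- power basis of ℚ⟮ζ⟯
  have hgen : minpoly ℚ (IntermediateField.AdjoinSimple.gen ℚ ζ) = minpoly ℚ ζ := by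
    rw [← minpoly.algebraMap_eq (algebraMap ℚ⟮ζ⟯ ℂ).injective,
      IntermediateField.AdjoinSimple.algebraMap_gen]
  have hcyc : minpoly ℚ ζ = Polynomial.cyclotomic m ℚ :=
    (Polynomial.cyclotomic_eq_minpoly_rat hζ hmpos).symm
  haveI : NeZero ((m : ℕ) : ℂ) := ⟨by exact_mod_cast hm0⟩
  have hωroot : (Polynomial.aeval ω)
      (minpoly ℚ (IntermediateField.adjoin.powerBasis hζint).gen) = 0 := by
    rw [IntermediateField.adjoin.powerBasis_gen, hgen, hcyc, aeval_def, ← Polynomial.eval_map,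
      Polynomial.map_cyclotomic]
    exact (Polynomial.isRoot_cyclotomic_iff.mpr hω)
  set σ : ℚ⟮ζ⟯ →ₐ[ℚ] ℂ := (IntermediateField.adjoin.powerBasis hζint).lift ω hωroot with hσdef
  have hσgen : σ (IntermediateField.AdjoinSimple.gen ℚ ζ) = ω := by
    have := (IntermediateField.adjoin.powerBasis hζint).lift_gen ω hωroot
    rwa [IntermediateField.adjoin.powerBasis_gen] at this
  set g : ℚ⟮ζ⟯ := IntermediateField.AdjoinSimple.gen ℚ ζ with hg
  set w : ℚ⟮ζ⟯ := g + g⁻¹ with hw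
  have hmapw : algebraMap ℚ⟮ζ⟯ ℂ w = ζ + ζ⁻¹ := by
    rw [hw, map_add, map_inv₀, IntermediateField.AdjoinSimple.algebraMap_gen]
  have hσw : σ w = ω + ω⁻¹ := by
    rw [hw, map_add, map_inv₀, hσgen]
  have hchain : minpoly ℚ (X n) = minpoly ℚ (ω + ω⁻¹) := by
    calc minpoly ℚ (X n) = minpoly ℚ ((X n : ℝ) : ℂ) :=
          (minpoly.algebraMap_eq (algebraMap ℝ ℂ).injective (X n)).symm
      _ = minpoly ℚ (algebraMap ℚ⟮ζ⟯ ℂ w) := by rw [hmapw, hXC]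
      _ = minpoly ℚ w := minpoly.algebraMap_eq (algebraMap ℚ⟮ζ⟯ ℂ).injective w
      _ = minpoly ℚ (σ w) := (minpoly.algHom_eq σ (σ.toRingHom.injective) w).symm
      _ = minpoly ℚ (ω + ω⁻¹) := by rw [hσw]
  have hcast : ω + ω⁻¹ = ((2 * Real.cos ((2 * j + 1) * Real.pi / 2 ^ (n + 1)) : ℝ) : ℂ) :=
    two_cos_eq n j
  have heq : minpoly ℚ (X n)
      = minpoly ℚ (2 * Real.cos ((2 * j + 1) * Real.pi / 2 ^ (n + 1)) : ℝ) := by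
    rw [hchain, hcast]
    exact minpoly.algebraMap_eq (algebraMap ℝ ℂ).injective _
  rw [heq]
  exact minpoly.aeval ℚ _


lemma part2 (n : ℕ) (xr : ℝ) (hXint : IsIntegral ℚ (X n))
    (haev : (Polynomial.aeval xr) (minpoly ℚ (X n)) = 0)
    (hX1 : 1 < X n) (hxlt : xr < 1) (hxpos : 0 < xr + 1) :
    Real.sqrt ((X n + 1) / (X n - 1)) ∉ IntermediateField.adjoin ℚ ({X n} : Set ℝ) := by
  have hrpos : 0 < (X n + 1) / (X n - 1) := div_pos (by linarith) (by linarith)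
  intro hmem
  set s : ℝ := Real.sqrt ((X n + 1) / (X n - 1)) with hs
  have hs2 : s ^ 2 = (X n + 1) / (X n - 1) := Real.sq_sqrt hrpos.le
  set g2 := IntermediateField.AdjoinSimple.gen ℚ (X n) with hg2
  have hgen2 : minpoly ℚ g2 = minpoly ℚ (X n) := by
    rw [← minpoly.algebraMap_eq (algebraMap ℚ⟮X n⟯ ℝ).injective,
      IntermediateField.AdjoinSimple.algebraMap_gen]
  have hroot' : (Polynomial.aeval xr)
      (minpoly ℚ (IntermediateField.adjoin.powerBasis hXint).gen) = 0 := by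
    rw [IntermediateField.adjoin.powerBasis_gen, hgen2]
    exact haev
  set τ : ℚ⟮X n⟯ →ₐ[ℚ] ℝ := (IntermediateField.adjoin.powerBasis hXint).lift _ hroot' with hτ
  have hτg : τ g2 = xr := by
    have := (IntermediateField.adjoin.powerBasis hXint).lift_gen _ hroot'
    rwa [IntermediateField.adjoin.powerBasis_gen] at this
  set u : ℚ⟮X n⟯ := ⟨s, hmem⟩ with hu
  have hu2 : u ^ 2 * (g2 - 1) = g2 + 1 := by
    apply (algebraMap ℚ⟮X n⟯ ℝ).injective
    rw [map_mul, map_pow, map_add, map_sub, map_one,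
      IntermediateField.AdjoinSimple.algebraMap_gen]
    show s ^ 2 * (X n - 1) = X n + 1
    rw [hs2, div_mul_cancel₀ _ (by linarith : _root_.X n - 1 ≠ 0)]
  have hτu : (τ u) ^ 2 * (xr - 1) = xr + 1 := by
    rw [← hτg]
    calc τ u ^ 2 * (τ g2 - 1) = τ (u ^ 2 * (g2 - 1)) := by
          rw [map_mul, map_pow, map_sub, map_one]
      _ = τ (g2 + 1) := by rw [hu2]
      _ = τ g2 + 1 := by rw [map_add, map_one]
  nlinarith [sq_nonneg (τ u)]

theorem stmt11 (n : ℕ) (hn : 2 ≤ n) :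
    (∃ k : ℕ, k < 2 ^ n ∧
      0 < 2 * Real.cos ((2 * k + 1) * Real.pi / 2 ^ (n + 1)) ∧
      2 * Real.cos ((2 * k + 1) * Real.pi / 2 ^ (n + 1)) < 1 ∧
      (2 * Real.cos ((2 * k + 1) * Real.pi / 2 ^ (n + 1)) + 1) /
        (2 * Real.cos ((2 * k + 1) * Real.pi / 2 ^ (n + 1)) - 1) < 0) ∧
    Real.sqrt ((X n + 1) / (X n - 1)) ∉
      IntermediateField.adjoin ℚ ({X n} : Set ℝ) := by
  have hπ := Real.pi_pos
  set k : ℕ := 2 ^ (n - 1) - 1 with hk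
  have hp : 2 ^ (n - 1) * 2 = 2 ^ n := by
    rw [← pow_succ, Nat.sub_add_cancel (le_trans one_le_two hn)]
  have hp1 : 1 ≤ 2 ^ (n - 1) := Nat.one_le_two_pow
  have h2k : 2 * k + 1 = 2 ^ n - 1 := by omega
  have hco : Nat.Coprime (2 * k + 1) (2 ^ (n + 2)) := by
    apply Nat.Coprime.pow_right
    have : 2 * k + 1 ≠ 0 := by omega
    exact Nat.coprime_two_right.mpr (Nat.odd_iff.mpr (by omega))
  -- real form of 2k+1
  have hy4 : (4 : ℝ) ≤ 2 ^ n := by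
    calc (4 : ℝ) = 2 ^ 2 := by norm_num
    _ ≤ 2 ^ n := pow_le_pow_right₀ one_le_two hn
  have h2k' : (2 * (k : ℝ) + 1) = 2 ^ n - 1 := by
    have h1 : ((2 * k + 1 : ℕ) : ℝ) = ((2 ^ n - 1 : ℕ) : ℝ) := congrArg (Nat.cast (R := ℝ)) h2k
    have h2 : (1 : ℕ) ≤ 2 ^ n := Nat.one_le_two_pow
    push_cast [h2] at h1
    linarith
  set A : ℝ := (2 * (k : ℝ) + 1) * Real.pi / 2 ^ (n + 1) with hA
  have h2y : (2 : ℝ) ^ (n + 1) = 2 ^ n * 2 := by rw [pow_succ]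
  have hApos : 0 < A := by
    apply div_pos (by nlinarith) (by positivity)
  have hAlt : A < Real.pi / 2 := by
    rw [hA, div_lt_div_iff₀ (by positivity) (by norm_num)]
    nlinarith
  have hAgt : Real.pi / 3 < A := by
    rw [hA, div_lt_div_iff₀ (by norm_num) (by positivity)]
    nlinarith
  have hcospos : 0 < Real.cos A :=
    Real.cos_pos_of_mem_Ioo ⟨by linarith, hAlt⟩
  have hcoslt : Real.cos A < 1 / 2 := by
    have := Real.cos_lt_cos_of_nonneg_of_le_pi (by positivity) (by linarith) hAgt
    rwa [Real.cos_pi_div_three] at this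
  have hkxpos : 0 < 2 * Real.cos A := by linarith
  have hkxlt : 2 * Real.cos A < 1 := by linarith
  have hratneg : (2 * Real.cos A + 1) / (2 * Real.cos A - 1) < 0 :=
    div_neg_of_pos_of_neg (by linarith) (by linarith)
  obtain ⟨hXint, haev⟩ := conj_aeval n k hco
  constructor
  · exact ⟨k, by omega, hkxpos, hkxlt, hratneg⟩
  -- part 2
  have hX1 : 1 < X n := by
    have hB : Real.pi / 2 ^ (n + 1) < Real.pi / 3 := by
      apply div_lt_div_of_pos_left hπ (by norm_num)
      nlinarith
    have := Real.cos_lt_cos_of_nonneg_of_le_pi (by positivity) (by linarith) hB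
    rw [Real.cos_pi_div_three] at this
    rw [show X n = 2 * Real.cos (Real.pi / 2 ^ (n + 1)) from rfl]
    linarith
  exact part2 n (2 * Real.cos A) hXint haev hX1 (by linarith) (by linarith)
end

section
/- For all n ≥ 1, (π/2^n) · Σ_{k=1}^{2^{n-1}} (2cos((2k-1)π/2^{n+1}) - 1)^2 < π/4. -/
open Real Filter Finset

/-!
Writing `N = 2^(n-1)` and `x = π/(4N)`, the sum is the midpoint Riemann sum of `(2 cos t - 1)^2`
over `[0, π/2]`. Expanding the square and summing the odd cosines in closed form gives the exact
value `3π/2 - π/(N sin x)`, which is below the integral `3π/2 - 4` because `sin x < x`; and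
`3π/2 - 4 < π/4` since `π < 16/5`.
-/

lemma two_sin_mul_sum_cos_odd_mul (x : ℝ) (M : ℕ) :
    2 * sin x * ∑ k ∈ range M, cos ((2 * k + 1) * x) = sin (2 * M * x) := by
  induction M with
  | zero => simp
  | succ M ih =>
    have h := sin_sub_sin (2 * ((M : ℝ) + 1) * x) (2 * M * x)
    rw [show (2 * ((M : ℝ) + 1) * x - 2 * M * x) / 2 = x by ring,
      show (2 * ((M : ℝ) + 1) * x + 2 * M * x) / 2 = (2 * M + 1) * x by ring] at h
    rw [sum_range_succ, mul_add, ih]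
    push_cast
    linarith

lemma sum_cos_odd_mul {x : ℝ} (hx : sin x ≠ 0) (M : ℕ) :
    ∑ k ∈ range M, cos ((2 * k + 1) * x) = sin (2 * M * x) / (2 * sin x) := by
  rw [eq_div_iff (by positivity), mul_comm, two_sin_mul_sum_cos_odd_mul]

lemma sq_two_cos_sub_one (θ : ℝ) : (2 * cos θ - 1) ^ 2 = 3 + 2 * cos (2 * θ) - 4 * cos θ := by
  rw [cos_two_mul]
  ring

lemma sum_sq_two_cos_odd_mul_sub_one {x : ℝ} (hx : sin (2 * x) ≠ 0) (M : ℕ) :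
    ∑ k ∈ range M, (2 * cos ((2 * k + 1) * x) - 1) ^ 2
      = 3 * M + sin (4 * M * x) / sin (2 * x) - 2 * sin (2 * M * x) / sin x := by
  have hx' : sin x ≠ 0 := fun h => hx (by rw [sin_two_mul, h, mul_zero, zero_mul])
  have hdouble (k : ℕ) : 2 * ((2 * (k : ℝ) + 1) * x) = (2 * k + 1) * (2 * x) := by ring
  simp only [sq_two_cos_sub_one, hdouble]
  rw [sum_sub_distrib, sum_add_distrib, ← mul_sum, ← mul_sum, sum_cos_odd_mul hx,
    sum_cos_odd_mul hx', sum_const, card_range, nsmul_eq_mul]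
  field_simp
  ring_nf

lemma sin_mul_pi_div_four_mul_pos {N : ℕ} (hN : 0 < N) {c : ℝ} (hc₀ : 0 < c) (hc₂ : c ≤ 2) :
    0 < sin (c * (π / (4 * N))) := by
  have hN' : (1 : ℝ) ≤ N := by exact_mod_cast hN
  apply sin_pos_of_pos_of_lt_pi (by positivity)
  calc c * (π / (4 * N)) ≤ 2 * (π / 4) := by gcongr; linarith
    _ < π := by linarith [pi_pos]

lemma midpoint_sum_sq_two_cos_sub_one {N : ℕ} (hN : 0 < N) :
    π / (2 * N) * ∑ k ∈ range N, (2 * cos ((2 * k + 1) * (π / (4 * N))) - 1) ^ 2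
      = 3 * π / 2 - π / (N * sin (π / (4 * N))) := by
  rw [sum_sq_two_cos_odd_mul_sub_one (sin_mul_pi_div_four_mul_pos hN two_pos le_rfl).ne',
    show 4 * (N : ℝ) * (π / (4 * N)) = π by field_simp,
    show 2 * (N : ℝ) * (π / (4 * N)) = π / 2 by field_simp; ring, sin_pi, sin_pi_div_two]
  field_simp
  ring

lemma midpoint_sum_sq_two_cos_sub_one_lt {N : ℕ} (hN : 0 < N) :
    π / (2 * N) * ∑ k ∈ range N, (2 * cos ((2 * k + 1) * (π / (4 * N))) - 1) ^ 2
      < 3 * π / 2 - 4 := by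
  have hN' : (0 : ℝ) < N := by exact_mod_cast hN
  have hx : 0 < π / (4 * N) := by positivity
  have hsin : 0 < sin (π / (4 * N)) := by
    simpa using sin_mul_pi_div_four_mul_pos hN one_pos one_le_two
  have hlt : N * sin (π / (4 * N)) < π / 4 :=
    calc N * sin (π / (4 * N)) < N * (π / (4 * N)) := by gcongr; exact sin_lt hx
      _ = π / 4 := by field_simp
  rw [midpoint_sum_sq_two_cos_sub_one hN, sub_lt_sub_iff_left, lt_div_iff₀ (by positivity)]
  linarith

theorem stmt12 (n : ℕ) (hn : 1 ≤ n) :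
    (Real.pi / 2 ^ n) * ∑ k ∈ Finset.range (2 ^ (n - 1)),
      (2 * Real.cos ((2 * k + 1) * Real.pi / 2 ^ (n + 1)) - 1) ^ 2 <
      Real.pi / 4 := by
  obtain ⟨m, rfl⟩ : ∃ m, n = m + 1 := ⟨n - 1, by omega⟩
  have hN : 0 < 2 ^ m := by positivity
  calc π / 2 ^ (m + 1) * ∑ k ∈ range (2 ^ (m + 1 - 1)),
        (2 * cos ((2 * k + 1) * π / 2 ^ (m + 1 + 1)) - 1) ^ 2
      = π / (2 * ((2 ^ m : ℕ) : ℝ)) * ∑ k ∈ range (2 ^ m),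
        (2 * cos ((2 * k + 1) * (π / (4 * ((2 ^ m : ℕ) : ℝ)))) - 1) ^ 2 := by
        push_cast
        rw [pow_succ', show (2 : ℝ) ^ (m + 1 + 1) = 4 * 2 ^ m by ring]
        simp only [mul_div_assoc]
    _ < 3 * π / 2 - 4 := midpoint_sum_sq_two_cos_sub_one_lt hN
    _ < π / 4 := by linarith [pi_lt_d2]
end

section
/- For all n ≥ 1, 1 < (8/2^n) · Σ_{k=1}^{2^{n-1}} cos((2k-1)π/2^{n+1}). -/
open Real Filter Finset

/-! Multiplying by `2 sin θ` telescopes the sum, since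
`2 sin θ cos ((2k+1)θ) = sin (2(k+1)θ) - sin (2kθ)`; with `θ = π / 2^(n+1)` and
`2^(n-1)` terms it ends at `sin (π/2) = 1`. So the quantity equals `8 / (2^(n+1) sin θ)`,
and `2^(n+1) sin θ < 2^(n+1) θ = π < 8`. -/

theorem two_mul_sin_mul_sum_range_cos_odd_mul (θ : ℝ) (m : ℕ) :
    2 * sin θ * ∑ k ∈ range m, cos ((2 * k + 1) * θ) = sin (2 * m * θ) := by
  induction m with
  | zero => simp
  | succ m ih =>
    rw [sum_range_succ, mul_add, ih, two_mul_sin_mul_cos]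
    push_cast
    rw [show θ - (2 * m + 1) * θ = -(2 * m * θ) by ring, sin_neg]
    ring_nf

theorem mul_sin_pi_div_lt_pi {x : ℝ} (hx : 0 < x) : x * sin (π / x) < π := by
  calc x * sin (π / x) < x * (π / x) := by gcongr; exact sin_lt (by positivity)
    _ = π := by field_simp

theorem stmt14 (n : ℕ) (hn : 1 ≤ n) :
    1 < (8 / 2 ^ n) * ∑ k ∈ Finset.range (2 ^ (n - 1)),
      Real.cos ((2 * k + 1) * Real.pi / 2 ^ (n + 1)) := by
  simp_rw [mul_div_assoc]
  set θ : ℝ := π / 2 ^ (n + 1) with hθ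
  set S := ∑ k ∈ range (2 ^ (n - 1)), cos ((2 * k + 1) * θ)
  have hsum : 2 * sin θ * S = 1 := by
    rw [two_mul_sin_mul_sum_range_cos_odd_mul, ← sin_pi_div_two]
    congr 1
    rw [Nat.cast_pow, Nat.cast_ofNat, ← pow_succ', Nat.sub_add_cancel hn, hθ,
      pow_succ]
    field_simp
  have hsin_pos : 0 < sin θ :=
    sin_pos_of_pos_of_lt_pi (by positivity)
      (div_lt_self pi_pos (one_lt_pow₀ one_lt_two (by omega)))
  have hS_pos : 0 < S := pos_of_mul_pos_right (hsum ▸ one_pos) (by positivity)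
  have hsmall : 2 ^ (n + 1) * sin θ < 8 :=
    (mul_sin_pi_div_lt_pi (by positivity)).trans (by linarith [pi_lt_four])
  rw [div_mul_eq_mul_div, one_lt_div (by positivity)]
  calc (2 : ℝ) ^ n = 2 ^ (n + 1) * sin θ * S := by
        linear_combination (-2 ^ n : ℝ) * hsum
    _ < 8 * S := by gcongr
end

section
/- For all n ≥ 1, (π/2^n) · Σ_{k=1}^{2^{n-1}} 1/(2cos((2k-1)π/2^{n+1}) + 1) < π/4. -/
/-!
The sum is the midpoint rule with `2^(n-1)` nodes for `∫₀^{π/2} f`, `f x = 1 / (2 cos x + 1)`,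
and `f` is convex there, being the reciprocal of a positive concave function. On any interval
the midpoint sum of a convex function is at most its trapezoid value: nodes symmetric about
the centre pair up, and `f x + f (a + b - x) ≤ f a + f b`. For `n ≥ 3` the nodes fill the four
intervals `[jπ/8, (j+1)π/8]` evenly, which bounds the left-hand side by the trapezoid rule
`(π/8) (f 0 / 2 + f (π/8) + f (π/4) + f (3π/8) + f (π/2) / 2) ≈ 0.78480 < π/4 ≈ 0.78540`;
for `n = 1, 2` the sum is evaluated directly with the same values of `f`.
-/

open Real Filter Finset

lemma ConcaveOn.convexOn_inv {E : Type*} [AddCommMonoid E] [Module ℝ E] {s : Set E}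
    {f : E → ℝ} (hf : ConcaveOn ℝ s f) (hpos : ∀ x ∈ s, 0 < f x) :
    ConvexOn ℝ s fun x => (f x)⁻¹ := by
  refine ⟨hf.1, fun x hx y hy a b ha hb hab => ?_⟩
  have hfx := hpos x hx
  have hfy := hpos y hy
  have hmix : 0 < a * f x + b * f y := by
    rcases ha.eq_or_lt with rfl | ha
    · simp_all
    · positivity
  calc (f (a • x + b • y))⁻¹ ≤ (a * f x + b * f y)⁻¹ :=
        inv_anti₀ hmix (by simpa only [smul_eq_mul] using hf.2 hx hy ha hb hab)
    _ ≤ a * (f x)⁻¹ + b * (f y)⁻¹ := by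
        simpa only [smul_eq_mul, zpow_neg_one] using
          (convexOn_zpow (𝕜 := ℝ) (-1)).2 (Set.mem_Ioi.2 hfx) (Set.mem_Ioi.2 hfy) ha hb hab

lemma convexOn_inv_two_mul_cos_add_one :
    ConvexOn ℝ (Set.Icc (-(π / 2)) (π / 2)) fun x => (2 * cos x + 1)⁻¹ := by
  refine ((strictConcaveOn_cos_Icc.concaveOn.smul zero_le_two).add_const 1).convexOn_inv
    fun x hx => ?_
  have := cos_nonneg_of_mem_Icc hx
  simp only [Pi.add_apply, smul_eq_mul]
  linarith

lemma ConvexOn.apply_add_apply_reflect_le {f : ℝ → ℝ} {a b x : ℝ}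
    (hf : ConvexOn ℝ (Set.Icc a b) f) (hx : x ∈ Set.Icc a b) :
    f x + f (a + b - x) ≤ f a + f b := by
  obtain ⟨hax, hxb⟩ := hx
  rcases hax.eq_or_lt with rfl | hax
  · simp
  rcases hxb.eq_or_lt with rfl | hxb
  · simp [add_comm]
  have hab : a ≤ b := by linarith
  have h₁ := hf.secant_mono_aux1 (Set.left_mem_Icc.2 hab) (Set.right_mem_Icc.2 hab) hax hxb
  have h₂ := hf.secant_mono_aux1 (Set.left_mem_Icc.2 hab) (Set.right_mem_Icc.2 hab)
    (y := a + b - x) (by linarith) (by linarith)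
  refine le_of_mul_le_mul_left ?_ (sub_pos.2 (hax.trans hxb))
  linarith

lemma ConvexOn.sum_range_midpoints_le {f : ℝ → ℝ} {a b : ℝ} (hab : a ≤ b)
    (hf : ConvexOn ℝ (Set.Icc a b) f) (M : ℕ) :
    ∑ i ∈ range M, f (a + (2 * i + 1) * (b - a) / (2 * M)) ≤ M * ((f a + f b) / 2) := by
  set x : ℕ → ℝ := fun i => a + (2 * i + 1) * (b - a) / (2 * M) with hx_def
  have hx_mem : ∀ i ∈ range M, x i ∈ Set.Icc a b := by
    intro i hi
    have hi : (i : ℝ) + 1 ≤ M := by exact_mod_cast mem_range.1 hi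
    have hM : (0 : ℝ) < M := by linarith [i.cast_nonneg (α := ℝ)]
    constructor
    · have : 0 ≤ (2 * i + 1) * (b - a) / (2 * M) := by
        have := sub_nonneg.2 hab; positivity
      linarith
    · rw [hx_def, ← le_sub_iff_add_le', div_le_iff₀ (by positivity)]
      nlinarith
  have hx_reflect : ∀ i ∈ range M, x (M - 1 - i) = a + b - x i := by
    intro i hi
    have hi := mem_range.1 hi
    have hM : (M : ℝ) ≠ 0 := by exact_mod_cast (i.zero_le.trans_lt hi).ne'
    simp only [hx_def, Nat.cast_sub (Nat.le_sub_one_of_lt hi),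
      Nat.cast_sub (Nat.one_le_of_lt hi)]
    field_simp
    ring
  have hsum : ∑ i ∈ range M, f (x i) = ∑ i ∈ range M, f (a + b - x i) := by
    rw [← sum_range_reflect]
    exact sum_congr rfl fun i hi => by rw [hx_reflect i hi]
  have hpair : ∑ i ∈ range M, (f (x i) + f (a + b - x i)) ≤ M * (f a + f b) := by
    simpa [mul_add] using sum_le_sum fun i hi => hf.apply_add_apply_reflect_le (hx_mem i hi)
  rw [sum_add_distrib, ← hsum] at hpair
  linarith

lemma ConvexOn.sum_range_midpoints_le_trapezoid {f : ℝ → ℝ} {a L : ℝ} (K M : ℕ)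
    (hL : 0 ≤ L) (hf : ConvexOn ℝ (Set.Icc a (a + K * L)) f) :
    ∑ k ∈ range (K * M), f (a + (2 * k + 1) * L / (2 * M)) ≤
      M * ∑ j ∈ range K, (f (a + j * L) + f (a + (j + 1) * L)) / 2 := by
  induction K with
  | zero => simp
  | succ K ih =>
    push_cast at hf
    have hsub : Set.Icc (a + K * L) (a + (K + 1) * L) ⊆ Set.Icc a (a + (K + 1) * L) :=
      Set.Icc_subset_Icc_left (by nlinarith [K.cast_nonneg (α := ℝ)])
    have hfirst := ih <| hf.subset (Set.Icc_subset_Icc_right (by linarith)) (convex_Icc _ _)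
    have hlast := (hf.subset hsub (convex_Icc _ _)).sum_range_midpoints_le (by linarith) M
    rcases M.eq_zero_or_pos with rfl | hM
    · simp
    have hM : (M : ℝ) ≠ 0 := by exact_mod_cast hM.ne'
    rw [add_mul, one_mul, sum_range_add, sum_range_succ, mul_add]
    refine add_le_add hfirst (le_of_eq_of_le (sum_congr rfl fun i _ => ?_) hlast)
    congr 1
    push_cast
    field_simp
    ring

lemma inv_two_mul_cos_pi_div_eight_add_one_lt : (2 * cos (π / 8) + 1)⁻¹ < 0.3513 := by
  have h2 : 1.414 < √2 := by rw [lt_sqrt (by norm_num)]; norm_num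
  have h : 1.847 < √(2 + √2) := by rw [lt_sqrt (by norm_num)]; linarith
  rw [cos_pi_div_eight, inv_lt_comm₀ (by positivity) (by norm_num)]
  linarith

lemma inv_two_mul_cos_pi_div_four_add_one_lt : (2 * cos (π / 4) + 1)⁻¹ < 0.4143 := by
  have h2 : 1.414 < √2 := by rw [lt_sqrt (by norm_num)]; norm_num
  rw [cos_pi_div_four, inv_lt_comm₀ (by positivity) (by norm_num)]
  linarith

lemma inv_two_mul_cos_three_pi_div_eight_add_one_lt : (2 * cos (3 * π / 8) + 1)⁻¹ < 0.5666 := by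
  have h2 : √2 < 1.4143 := by rw [sqrt_lt' (by norm_num)]; norm_num
  have h : 0.765 < √(2 - √2) := by rw [lt_sqrt (by norm_num)]; linarith
  rw [show 3 * π / 8 = π / 2 - π / 8 by ring, cos_pi_div_two_sub, sin_pi_div_eight,
    inv_lt_comm₀ (by positivity) (by norm_num)]
  linarith

lemma sum_range_four_trapezoid_inv_two_mul_cos_add_one_lt :
    ∑ j ∈ range 4,
      ((2 * cos (j * (π / 8)) + 1)⁻¹ + (2 * cos ((j + 1) * (π / 8)) + 1)⁻¹) / 2 < 2 := by
  simp only [sum_range_succ, sum_range_zero]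
  norm_num only [zero_add]
  rw [show (2 : ℝ) * (π / 8) = π / 4 by ring, show (3 : ℝ) * (π / 8) = 3 * π / 8 by ring,
    show (4 : ℝ) * (π / 8) = π / 2 by ring, zero_mul, one_mul, cos_zero, cos_pi_div_two]
  linarith [inv_two_mul_cos_pi_div_eight_add_one_lt, inv_two_mul_cos_pi_div_four_add_one_lt,
    inv_two_mul_cos_three_pi_div_eight_add_one_lt]

theorem stmt15 (n : ℕ) (hn : 1 ≤ n) :
    (Real.pi / 2 ^ n) * ∑ k ∈ Finset.range (2 ^ (n - 1)),
      1 / (2 * Real.cos ((2 * k + 1) * Real.pi / 2 ^ (n + 1)) + 1) <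
      Real.pi / 4 := by
  suffices hS : ∑ k ∈ range (2 ^ (n - 1)), (2 * cos ((2 * k + 1) * π / 2 ^ (n + 1)) + 1)⁻¹
      < 2 ^ n / 4 by
    rw [div_mul_eq_mul_div, div_lt_div_iff₀ (by positivity) (by norm_num)]
    simp only [one_div]
    nlinarith [pi_pos]
  match n, hn with
  | 1, _ =>
    norm_num only [sum_range_one]
    rw [one_mul]
    linarith [inv_two_mul_cos_pi_div_four_add_one_lt]
  | 2, _ =>
    norm_num only [sum_range_succ, sum_range_zero]
    rw [one_mul, zero_add]
    linarith [inv_two_mul_cos_pi_div_eight_add_one_lt,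
      inv_two_mul_cos_three_pi_div_eight_add_one_lt]
  | m + 3, _ =>
    have hf : ConvexOn ℝ (Set.Icc 0 (0 + (4 : ℕ) * (π / 8))) fun x => (2 * cos x + 1)⁻¹ :=
      convexOn_inv_two_mul_cos_add_one.subset
        (Set.Icc_subset_Icc (by linarith [pi_pos]) (by push_cast; linarith)) (convex_Icc _ _)
    have hmid := hf.sum_range_midpoints_le_trapezoid 4 (2 ^ m) (by positivity)
    push_cast at hmid
    simp only [zero_add] at hmid
    have hnode (k : ℕ) :
        (2 * (k : ℝ) + 1) * π / 2 ^ (m + 3 + 1) = (2 * k + 1) * (π / 8) / (2 * 2 ^ m) := by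
      rw [pow_add, pow_add]
      ring
    rw [show 2 ^ (m + 3 - 1) = 4 * 2 ^ m by rw [Nat.add_sub_assoc (by norm_num), pow_add]; ring]
    simp only [hnode]
    calc _ ≤ _ := hmid
      _ < 2 ^ m * 2 :=
        mul_lt_mul_of_pos_left sum_range_four_trapezoid_inv_two_mul_cos_add_one_lt (by positivity)
      _ = 2 ^ (m + 3) / 4 := by ring
end

section
/- For all n ≥ 2, Σ_{k=1}^{2^{n-1}} |(2cos((2k-1)π/2^{n+1}) + 1)/(2cos((2k-1)π/2^{n+1}) - 1)|^{2/3} < 2^{n-1}·33. -/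
open Real Filter Finset

/-!
Write `N = 2^(n-1)`, so the angles are `x_k = (2k+1)π/(4N)`, `k < N`, all in `[0, π/2]`.
The numerator `2 cos x + 1` is at most `3`, and the denominator vanishes only at `π/3`,
to first order: `|2 cos x - 1| ≥ (2/π)|x - π/3|`. Since `|x_k - π/3| = π|6k+3-4N|/(12N)` and
the odd integers `|6k+3-4N|` grow at least like `3|k - q|` away from the index `q = ⌊2N/3⌋`
nearest to `π/3`, the `k`-th term is at most `(18N / max 1 (3|k-q|))^(2/3)`. Summing, the term
`k = q` contributes `O(N^(2/3))` and the two tails `2 (6N)^(2/3) ∑ j^(-2/3) ≤ 6 · 6^(2/3) N`,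
which gives the bound `27 N`.
-/

noncomputable def cosRatio (x : ℝ) : ℝ := (2 * cos x + 1) / (2 * cos x - 1)

/- Bernoulli's inequality `(1 - 1/y)^(1-p) ≤ 1 - (1-p)/y`, multiplied by `y^(1-p)`. -/
lemma one_div_rpow_le_rpow_sub_rpow_div {p y : ℝ} (hp0 : 0 ≤ p) (hp1 : p < 1) (hy : 1 ≤ y) :
    1 / y ^ p ≤ (y ^ (1 - p) - (y - 1) ^ (1 - p)) / (1 - p) := by
  have hy0 : 0 < y := by linarith
  have hbern := rpow_one_add_le_one_add_mul_self (s := -1 / y)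
    (by rw [neg_div, neg_le_neg_iff, div_le_one hy0]; exact hy) (sub_nonneg.2 hp1.le)
    (by linarith : 1 - p ≤ 1)
  rw [show 1 + -1 / y = (y - 1) / y by field_simp; ring, div_rpow (by linarith) hy0.le,
    div_le_iff₀ (rpow_pos_of_pos hy0 _)] at hbern
  have hyp : y ^ (1 - p) / y = 1 / y ^ p := by
    rw [← rpow_sub_one hy0.ne', sub_sub_cancel_left, rpow_neg hy0.le, one_div]
  have hexp : (1 + (1 - p) * (-1 / y)) * y ^ (1 - p) =
      y ^ (1 - p) - (1 - p) * (y ^ (1 - p) / y) := by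
    ring
  rw [le_div_iff₀ (by linarith), ← hyp]
  linarith

lemma sum_range_one_div_rpow_le {p : ℝ} (hp0 : 0 ≤ p) (hp1 : p < 1) (N : ℕ) :
    ∑ j ∈ range N, 1 / ((j : ℝ) + 1) ^ p ≤ (N : ℝ) ^ (1 - p) / (1 - p) := by
  induction N with
  | zero => simp [zero_rpow (by linarith : 1 - p ≠ 0)]
  | succ m ih =>
    have hstep := one_div_rpow_le_rpow_sub_rpow_div hp0 hp1
      (by linarith [m.cast_nonneg (α := ℝ)] : 1 ≤ (m : ℝ) + 1)
    rw [add_sub_cancel_right] at hstep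
    rw [sum_range_succ, Nat.cast_succ]
    calc _ ≤ (m : ℝ) ^ (1 - p) / (1 - p) +
          ((m + 1 : ℝ) ^ (1 - p) - (m : ℝ) ^ (1 - p)) / (1 - p) := add_le_add ih hstep
      _ = _ := by ring

lemma mul_abs_sub_pi_div_three_le_abs_two_mul_cos_sub_one {x : ℝ} (h0 : 0 ≤ x)
    (h2 : x ≤ π / 2) : 2 / π * |x - π / 3| ≤ |2 * cos x - 1| := by
  have hprod : 2 * cos x - 1 = -(4 * (sin ((x + π / 3) / 2) * sin ((x - π / 3) / 2))) := by
    linarith [cos_sub_cos x (π / 3), cos_pi_div_three]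
  have hsin_sum : 1 / 2 ≤ sin ((x + π / 3) / 2) := by
    rw [← sin_pi_div_six]
    exact sin_le_sin_of_le_of_le_pi_div_two (by linarith [pi_pos]) (by linarith) (by linarith)
  have hsin_diff : 2 / π * |(x - π / 3) / 2| ≤ |sin ((x - π / 3) / 2)| :=
    mul_abs_le_abs_sin (by rw [abs_le]; constructor <;> linarith [pi_pos])
  rw [abs_div, abs_two] at hsin_diff
  rw [hprod, abs_neg, abs_mul, abs_mul, abs_of_pos (by norm_num : (0 : ℝ) < 4),
    abs_of_pos (by linarith : 0 < sin ((x + π / 3) / 2))]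
  calc 2 / π * |x - π / 3| = 4 * (1 / 2 * (2 / π * (|x - π / 3| / 2))) := by ring
    _ ≤ _ := by gcongr

lemma abs_cosRatio_mul_abs_sub_pi_div_three_le {x : ℝ} (h0 : 0 ≤ x) (h2 : x ≤ π / 2) :
    |cosRatio x| * |x - π / 3| ≤ 3 * π / 2 := by
  have hden := mul_abs_sub_pi_div_three_le_abs_two_mul_cos_sub_one h0 h2
  have hnum : |2 * cos x + 1| ≤ 3 :=
    abs_le.2 ⟨by linarith [neg_one_le_cos x], by linarith [cos_le_one x]⟩
  rcases (abs_nonneg (2 * cos x - 1)).eq_or_lt with hzero | hpos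
  · simp only [cosRatio, abs_div, ← hzero, div_zero, zero_mul]
    positivity
  · rw [cosRatio, abs_div, div_mul_eq_mul_div, div_le_iff₀ hpos]
    calc |2 * cos x + 1| * |x - π / 3| ≤ 3 * |x - π / 3| := by gcongr
      _ = 3 * π / 2 * (2 / π * |x - π / 3|) := by field_simp
      _ ≤ 3 * π / 2 * |2 * cos x - 1| := by gcongr

/- `6k + 3 - 4N = 6(k - q) + c` with `q = ⌊2N/3⌋` and `c ∈ {3, 1, -1}`: it is odd, and at
least `6|k - q| - 3` in absolute value. -/
lemma one_le_natAbs_and_three_mul_natAbs_sub_le (N k : ℕ) :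
    1 ≤ (6 * (k : ℤ) + 3 - 4 * N).natAbs ∧
      3 * ((k : ℤ) - (2 * N / 3 : ℕ)).natAbs ≤ (6 * (k : ℤ) + 3 - 4 * N).natAbs := by
  omega

lemma abs_cosRatio_le (N k : ℕ) (hk : k < N) :
    |cosRatio ((2 * k + 1) * π / (4 * N))| ≤
      18 * N / max 1 (3 * (((k : ℤ) - (2 * N / 3 : ℕ)).natAbs : ℝ)) := by
  set x : ℝ := (2 * k + 1) * π / (4 * N)
  set d : ℝ := ((6 * (k : ℤ) + 3 - 4 * N).natAbs : ℝ)
  have hN : (0 : ℝ) < N := by exact_mod_cast k.zero_le.trans_lt hk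
  have hkN : (2 * k + 1 : ℝ) ≤ 2 * N := by exact_mod_cast (by omega : 2 * k + 1 ≤ 2 * N)
  have hdist : |x - π / 3| = π * d / (12 * N) := by
    rw [show x - π / 3 = π * (6 * k + 3 - 4 * N) / (12 * N) by simp only [x]; field_simp; ring]
    simp only [d, abs_div, abs_mul, abs_of_pos pi_pos,
      abs_of_pos (by positivity : (0 : ℝ) < 12 * N), Nat.cast_natAbs, Int.cast_abs]
    push_cast
    rfl
  have hbound := abs_cosRatio_mul_abs_sub_pi_div_three_le (x := x) (by positivity)
    (by simp only [x]; rw [div_le_div_iff₀ (by positivity) two_pos]; nlinarith [pi_pos])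
  rw [hdist] at hbound
  have hd : |cosRatio x| * d ≤ 18 * N := by
    refine le_of_mul_le_mul_right ?_ pi_pos
    calc |cosRatio x| * d * π = |cosRatio x| * (π * d / (12 * N)) * (12 * N) := by
          field_simp
      _ ≤ 3 * π / 2 * (12 * N) := by gcongr
      _ = 18 * N * π := by ring
  obtain ⟨hd1, hd3⟩ := one_le_natAbs_and_three_mul_natAbs_sub_le N k
  have hmax : max 1 (3 * (((k : ℤ) - (2 * N / 3 : ℕ)).natAbs : ℝ)) ≤ d :=
    max_le (Nat.one_le_cast.2 hd1)
      (by simpa only [Nat.cast_mul, Nat.cast_ofNat] using (Nat.cast_le (α := ℝ)).2 hd3)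
  rw [le_div_iff₀ (by positivity)]
  exact (mul_le_mul_of_nonneg_left hmax (abs_nonneg _)).trans hd

lemma sum_range_natAbs_sub_le (g : ℕ → ℝ) (hg : ∀ m, 0 ≤ g m) {q N : ℕ}
    (hqN : q ≤ N) :
    ∑ k ∈ range N, g ((k : ℤ) - q).natAbs ≤ g 0 + 2 * ∑ j ∈ range N, g (j + 1) := by
  rw [← sum_range_add_sum_Ico _ hqN]
  have hleft : ∑ k ∈ range q, g ((k : ℤ) - q).natAbs ≤ ∑ j ∈ range N, g (j + 1) := by
    calc _ = ∑ j ∈ range q, g (q - 1 - j + 1) := by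
            refine sum_congr rfl fun j hj => ?_
            rw [mem_range] at hj
            congr 1
            omega
      _ = ∑ j ∈ range q, g (j + 1) := sum_range_reflect (fun j => g (j + 1)) q
      _ ≤ _ := sum_le_sum_of_subset_of_nonneg (range_subset_range.2 hqN) fun j _ _ => hg _
  have hright :
      ∑ k ∈ Ico q N, g ((k : ℤ) - q).natAbs ≤ g 0 + ∑ j ∈ range N, g (j + 1) := by
    calc _ = ∑ j ∈ range (N - q), g j := by
            rw [sum_Ico_eq_sum_range]
            refine sum_congr rfl fun j _ => ?_
            congr 1
            omega
      _ ≤ ∑ j ∈ range (N + 1), g j :=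
            sum_le_sum_of_subset_of_nonneg (range_subset_range.2 (by omega)) fun j _ _ => hg _
      _ = _ := by rw [sum_range_succ', add_comm]
  linarith

lemma rpow_two_div_three_le_of_sq_le_cube {a b : ℝ} (ha : 0 ≤ a) (hb : 0 ≤ b)
    (h : a ^ 2 ≤ b ^ 3) : a ^ ((2 : ℝ) / 3) ≤ b :=
  calc a ^ ((2 : ℝ) / 3) = (a ^ 2) ^ (((3 : ℕ) : ℝ)⁻¹) := by
        rw [← rpow_natCast, ← rpow_mul ha]; norm_num
    _ ≤ (b ^ 3) ^ (((3 : ℕ) : ℝ)⁻¹) := by gcongr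
    _ = b := pow_rpow_inv_natCast hb (by norm_num)

lemma sum_rpow_abs_cosRatio_le (N : ℕ) :
    ∑ k ∈ range N, |cosRatio ((2 * k + 1) * π / (4 * N))| ^ ((2 : ℝ) / 3) ≤ 27 * N := by
  rcases N.eq_zero_or_pos with rfl | hN
  · simp
  have hN1 : (1 : ℝ) ≤ N := by exact_mod_cast hN
  set g : ℕ → ℝ := fun m => (18 * N / max 1 (3 * (m : ℝ))) ^ ((2 : ℝ) / 3)
  have hg_succ (j : ℕ) :
      g (j + 1) = (6 * N) ^ ((2 : ℝ) / 3) * (1 / ((j : ℝ) + 1) ^ ((2 : ℝ) / 3)) := by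
    have hj : (1 : ℝ) ≤ 3 * ((j + 1 : ℕ) : ℝ) := by
      push_cast
      linarith [j.cast_nonneg (α := ℝ)]
    simp only [g]
    rw [max_eq_right hj, show 18 * (N : ℝ) / (3 * ((j + 1 : ℕ) : ℝ)) = 6 * N / (j + 1) by
      push_cast; field_simp; ring, div_rpow (by positivity) (by positivity), mul_one_div]
  have hpow_sum := sum_range_one_div_rpow_le (p := 2 / 3) (by norm_num) (by norm_num) N
  rw [show (1 : ℝ) - 2 / 3 = 1 / 3 by norm_num, div_div_eq_mul_div, div_one,
    mul_comm] at hpow_sum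
  have h18 : (18 : ℝ) ^ ((2 : ℝ) / 3) ≤ 7 :=
    rpow_two_div_three_le_of_sq_le_cube (by norm_num) (by norm_num) (by norm_num)
  have h6 : (6 : ℝ) ^ ((2 : ℝ) / 3) ≤ 10 / 3 :=
    rpow_two_div_three_le_of_sq_le_cube (by norm_num) (by norm_num) (by norm_num)
  have hNpow : (N : ℝ) ^ ((2 : ℝ) / 3) ≤ N := rpow_le_self_of_one_le hN1 (by norm_num)
  have hNsplit : (N : ℝ) ^ ((2 : ℝ) / 3) * (N : ℝ) ^ ((1 : ℝ) / 3) = N := by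
    rw [← rpow_add (by positivity)]; norm_num
  calc _ ≤ ∑ k ∈ range N, g ((k : ℤ) - (2 * N / 3 : ℕ)).natAbs :=
        sum_le_sum fun k hk =>
          rpow_le_rpow (abs_nonneg _) (abs_cosRatio_le N k (mem_range.1 hk)) (by norm_num)
    _ ≤ g 0 + 2 * ∑ j ∈ range N, g (j + 1) :=
        sum_range_natAbs_sub_le g (fun m => by positivity) (by omega)
    _ = (18 * N) ^ ((2 : ℝ) / 3) + 2 * (6 * N) ^ ((2 : ℝ) / 3) *
          ∑ j ∈ range N, 1 / ((j : ℝ) + 1) ^ ((2 : ℝ) / 3) := by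
        simp only [hg_succ, ← mul_sum, g]
        norm_num
        ring
    _ ≤ (18 * N) ^ ((2 : ℝ) / 3) + 2 * (6 * N) ^ ((2 : ℝ) / 3) * (3 * N ^ ((1 : ℝ) / 3)) :=
        by gcongr
    _ = 18 ^ ((2 : ℝ) / 3) * N ^ ((2 : ℝ) / 3) + 6 * 6 ^ ((2 : ℝ) / 3) * N := by
        rw [mul_rpow (by norm_num) (by positivity), mul_rpow (by norm_num) (by positivity)]
        linear_combination (6 * (6 : ℝ) ^ ((2 : ℝ) / 3)) * hNsplit
    _ ≤ 7 * N + 6 * (10 / 3) * N := by gcongr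
    _ = 27 * N := by ring

theorem stmt16 (n : ℕ) (hn : 2 ≤ n) :
    ∑ k ∈ Finset.range (2 ^ (n - 1)),
      |(2 * Real.cos ((2 * k + 1) * Real.pi / 2 ^ (n + 1)) + 1) /
        (2 * Real.cos ((2 * k + 1) * Real.pi / 2 ^ (n + 1)) - 1)| ^ ((2 : ℝ) / 3) <
      2 ^ (n - 1) * 33 := by
  have hpow : (2 : ℝ) ^ (n + 1) = 4 * ((2 ^ (n - 1) : ℕ) : ℝ) := by
    rw [show n + 1 = n - 1 + 2 by omega, pow_add]
    push_cast
    ring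
  calc _ ≤ 27 * ((2 ^ (n - 1) : ℕ) : ℝ) := by
        simpa only [cosRatio, hpow] using sum_rpow_abs_cosRatio_le (2 ^ (n - 1))
    _ < _ := by
        push_cast
        linarith [pow_pos (two_pos : (0 : ℝ) < 2) (n - 1)]
end

section
/- For n ≥ 1, N_{n/n-1}(σ(1+X_n)·σ^2(1+X_n)⋯σ^{2^{n-1}}(1+X_n)) = -1, where N_{n/n-1}(x) = x·σ^{2^{n-1}}(x) and σ generates Gal(B_n/Q). -/
open Real Filter Finset

/-!
The Vieta–Lucas polynomial `C_{2^n}` (with `C_m(2 cos θ) = 2 cos(mθ)`) is monic of degree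
`2^n` and kills `x = 2 cos(π / 2^(n+1))`, hence all the `σ^j x`. These are `2^n` distinct
elements, because `x` generates `K` and `σ` has order `2^n`, so
`C_{2^n} = ∏_{j < 2^n} (X - σ^j x)` over `K`.
Evaluating at `-1`, where `C_{2^n}(-1) = -1`, gives `∏_{j < 2^n} σ^j (1 + x) = -1`, and the
left-hand side of the theorem is `σ` applied to this product.
-/

open scoped Polynomial

namespace Polynomial.Chebyshev

variable (R : Type*) [CommRing R]

theorem C_two_pow_succ (k : ℕ) : C R (2 ^ (k + 1)) = (C R (2 ^ k)).comp (X ^ 2 - 2) := by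
  rw [pow_succ, C_mul, C_two]

theorem C_two_pow_eval_neg_one (n : ℕ) : (C R (2 ^ n)).eval (-1) = -1 := by
  induction n with
  | zero => simp
  | succ k ih => rw [C_two_pow_succ, eval_comp]; norm_num [ih]

theorem monic_X_sq_sub_two : (X ^ 2 - 2 : R[X]).Monic := by
  monicity!

variable [Nontrivial R]

theorem natDegree_X_sq_sub_two : (X ^ 2 - 2 : R[X]).natDegree = 2 := by
  compute_degree!

theorem monic_C_two_pow (n : ℕ) : (C R (2 ^ n)).Monic := by
  induction n with
  | zero => simp
  | succ k ih =>
    rw [C_two_pow_succ]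
    exact ih.comp (monic_X_sq_sub_two R) (by simp [natDegree_X_sq_sub_two])

theorem natDegree_C_two_pow (n : ℕ) : (C R (2 ^ n)).natDegree = 2 ^ n := by
  induction n with
  | zero => simp
  | succ k ih =>
    rw [C_two_pow_succ, natDegree_comp_eq_of_mul_ne_zero, ih, natDegree_X_sq_sub_two, pow_succ]
    simp [(monic_C_two_pow R k).leadingCoeff, (monic_X_sq_sub_two R).leadingCoeff]

theorem C_two_pow_eval_X (n : ℕ) : (C ℝ (2 ^ n)).eval (_root_.X n) = 0 := by
  have h : ((2 ^ n : ℤ) : ℝ) * (π / 2 ^ (n + 1)) = π / 2 := by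
    push_cast; rw [pow_succ]; field_simp
  rw [_root_.X, C_two_mul_real_cos, h, cos_pi_div_two, mul_zero]

end Polynomial.Chebyshev

open Polynomial.Chebyshev

theorem Polynomial.Monic.eq_nodal {R ι : Type*} [CommRing R] [IsDomain R] {p : R[X]}
    (hp : p.Monic) {s : Finset ι} {v : ι → R} (hvs : Set.InjOn v s) (hdeg : p.natDegree = #s)
    (hroot : ∀ i ∈ s, p.IsRoot (v i)) : p = Lagrange.nodal s v := by
  refine Polynomial.eq_of_degree_le_of_eval_index_eq s hvs ?_ ?_ ?_ ?_
  · rw [Polynomial.degree_eq_natDegree hp.ne_zero, hdeg]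
  · rw [Polynomial.degree_eq_natDegree hp.ne_zero, hdeg, Lagrange.degree_nodal]
  · rw [hp.leadingCoeff, Lagrange.nodal_monic.leadingCoeff]
  · intro i hi
    rw [(hroot i hi).eq_zero, Lagrange.eval_nodal_at_node hi]

theorem AlgEquiv.algebraMap_eval_eq_prod_sub_pow_apply {F K : Type*} [CommRing F] [CommRing K]
    [IsDomain K] [Algebra F K] (σ : K ≃ₐ[F] K) {x : K} {p : F[X]} (hp : p.Monic)
    (hpx : Polynomial.aeval x p = 0) (hinj : Set.InjOn (fun j ↦ (σ ^ j) x) (range p.natDegree))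
    (c : F) :
    algebraMap F K (p.eval c) = ∏ j ∈ range p.natDegree, (algebraMap F K c - (σ ^ j) x) := by
  have hnodal :
      p.map (algebraMap F K) = Lagrange.nodal (range p.natDegree) (fun j ↦ (σ ^ j) x) := by
    refine (hp.map _).eq_nodal hinj (by rw [hp.natDegree_map, card_range]) fun j _ ↦ ?_
    rw [Polynomial.IsRoot, Polynomial.eval_map_algebraMap, Polynomial.aeval_algEquiv,
      AlgHom.comp_apply, hpx, map_zero]
  rw [← Polynomial.eval₂_at_apply, ← Polynomial.eval_map, hnodal, Lagrange.eval_nodal]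

theorem IntermediateField.pow_apply_injOn_of_eq_adjoin {F E : Type*} [Field F] [Field E]
    [Algebra F E] {K : IntermediateField F E} {α : E} (hK : K = adjoin F {α}) (σ : K ≃ₐ[F] K)
    {x : K} (hx : (x : E) = α) :
    Set.InjOn (fun j : ℕ ↦ (σ ^ j) x) (Set.Iio (orderOf σ)) := by
  intro a ha b hb hab
  refine pow_injOn_Iio_orderOf ha hb (AlgEquiv.coe_toAlgHom_injective ?_)
  refine algHom_ext_of_eq_adjoin F hK fun y hy ↦ ?_
  have hyx : (⟨y, hK.ge (subset_adjoin F _ hy)⟩ : K) = x := Subtype.ext (hy.trans hx.symm)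
  rw [hyx]
  exact hab

theorem AlgEquiv.prod_Icc_mul_pow_apply_prod_Icc {R A : Type*} [CommSemiring R] [CommSemiring A]
    [Algebra R A] (σ : A ≃ₐ[R] A) (y : A) (h : ℕ) :
    (∏ j ∈ Icc 1 h, (σ ^ j) y) * (σ ^ h) (∏ j ∈ Icc 1 h, (σ ^ j) y) =
      σ (∏ j ∈ range (2 * h), (σ ^ j) y) := by
  have hshift : ∏ j ∈ Icc 1 h, (σ ^ j) y = σ (∏ j ∈ range h, (σ ^ j) y) := by
    rw [← Ico_add_one_right_eq_Icc, prod_Ico_eq_prod_range, add_tsub_cancel_right, map_prod]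
    simp only [add_comm 1, pow_succ', AlgEquiv.mul_apply]
  rw [hshift, two_mul, prod_range_add, map_mul σ, ← AlgEquiv.mul_apply (σ ^ h) σ, ← pow_succ,
    pow_succ', AlgEquiv.mul_apply, map_prod (σ ^ h)]
  simp only [pow_add, AlgEquiv.mul_apply]

theorem AlgEquiv.prod_pow_apply_one_add {F K : Type*} [CommRing F] [CommRing K] [IsDomain K]
    [Algebra F K] (σ : K ≃ₐ[F] K) {x : K} {p : F[X]} (hp : p.Monic)
    (hpx : Polynomial.aeval x p = 0) (hinj : Set.InjOn (fun j ↦ (σ ^ j) x) (range p.natDegree)) :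
    ∏ j ∈ range p.natDegree, (σ ^ j) (1 + x) =
      (-1) ^ p.natDegree * algebraMap F K (p.eval (-1)) := by
  calc ∏ j ∈ range p.natDegree, (σ ^ j) (1 + x)
      = ∏ j ∈ range p.natDegree, -(algebraMap F K (-1) - (σ ^ j) x) :=
        prod_congr rfl fun j _ ↦ by rw [map_add, map_one, map_neg, map_one]; ring
    _ = _ := by rw [prod_neg, card_range, σ.algebraMap_eval_eq_prod_sub_pow_apply hp hpx hinj]

theorem stmt19 (n : ℕ) (hn : 1 ≤ n)
    (K : IntermediateField ℚ ℝ) (hK : K = IntermediateField.adjoin ℚ ({X n} : Set ℝ))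
    (σ : K ≃ₐ[ℚ] K) (hσ : orderOf σ = 2 ^ n)
    (x : K) (hx : (x : ℝ) = X n) :
    ((∏ j ∈ Finset.Icc 1 (2 ^ (n - 1)), (σ ^ j) (1 + x)) *
      (σ ^ (2 ^ (n - 1))) (∏ j ∈ Finset.Icc 1 (2 ^ (n - 1)), (σ ^ j) (1 + x))) = -1 := by
  have hroot : Polynomial.aeval x (C ℚ (2 ^ n)) = 0 := by
    have h := IntermediateField.aeval_coe K x (C ℚ (2 ^ n))
    rw [hx, Polynomial.aeval_def, ← Polynomial.eval_map, map_C, C_two_pow_eval_X] at h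
    exact_mod_cast h.symm
  have hinj : Set.InjOn (fun j ↦ (σ ^ j) x) (range (C ℚ (2 ^ n)).natDegree) := by
    rw [natDegree_C_two_pow, coe_range, ← hσ]
    exact IntermediateField.pow_apply_injOn_of_eq_adjoin hK σ hx
  have horbit := σ.prod_pow_apply_one_add (monic_C_two_pow ℚ n) hroot hinj
  have hhalf : 2 * 2 ^ (n - 1) = 2 ^ n := by rw [← pow_succ', Nat.sub_add_cancel hn]
  rw [natDegree_C_two_pow, C_two_pow_eval_neg_one,
    (Nat.even_pow.2 ⟨even_two, by omega⟩).neg_one_pow] at horbit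
  rw [σ.prod_Icc_mul_pow_apply_prod_Icc, hhalf, horbit]
  simp
end
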